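/- arXiv:2403.15563 — 6 statements merged into one kernel-verified Lean document; each statement's English description precedes it below -/
import Mathlib

section
/- Let D be a nonempty set of the form D = ∏_{i=1}^d I_i (a product of sets I_i), let F be a linear subspace of real-valued functions on D, and let P_1, …, P_d : F → F be linear operators satisfying Assumption I: (1) each P_j is a projection (P_j ∘ P_j = P_j), (2) P_i ∘ P_j = P_j ∘ P_i for all i, j, (3) for every f ∈ F the function P_j f is independent of the j-th coordinate (i.e. P_j f takes equal values at any two points of D agreeing in all coordinates except the j-th), and (4) P_j f = f whenever f ∈ F is independent of the j-th coordinate. For u ⊆ {1,…,d} define f_u := (∏_{j∈u} (Id − P_j)) ∘ (∏_{j∉u} P_j) applied to f. Then: (a) f = Σ_{u ⊆ {1,…,d}} f_u; and (b) this decomposition is minimal in the following sense: if f = Σ_{u ⊆ {1,…,d}} g_u is any decomposition with each g_u ∈ F independent of every coordinate j ∉ u, and if for some fixed u ⊆ {1,…,d} one has g_v = 0 for all v ⊇ u, then also f_v = 0 for all v ⊇ u. -/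
/-!
Since the `P j` commute, expanding `1 = ∏ j, (P j + (1 - P j))` gives the resolution of the
identity `∑ u, (∏ j ∈ u, (1 - P j)) * ∏ j ∉ u, P j = 1`, which is (a). For (b), `f_v` is the sum
over `w` of the `v`-th product applied to `g w`. If `v ⊆ w` then `g w = 0`; otherwise pick
`j ∈ v \ w`: `g w` does not depend on the `j`-th coordinate, so `P j` fixes it and the factor
`1 - P j` of the `v`-th product kills it.
-/

open Finset

section AnovaProduct

variable {M ι : Type*} [Ring M] [DecidableEq ι]

def anovaFactor (P : ι → M) (u : Finset ι) (j : ι) : M :=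
  if j ∈ u then 1 - P j else P j

variable {P : ι → M}

theorem commute_anovaFactor (hc : ∀ i j, Commute (P i) (P j)) (u v : Finset ι) (i j : ι) :
    Commute (anovaFactor P u i) (anovaFactor P v j) := by
  have h := hc i j
  unfold anovaFactor
  split_ifs
  · exact (Commute.one_right _).sub_right ((Commute.one_left _).sub_left h)
  · exact (Commute.one_left _).sub_left h
  · exact (Commute.one_right _).sub_right h
  · exact h

theorem pairwise_commute_anovaFactor (hc : ∀ i j, Commute (P i) (P j)) (s u : Finset ι) :
    (s : Set ι).Pairwise (Function.onFun Commute (anovaFactor P u)) :=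
  fun i _ j _ _ => commute_anovaFactor hc u u i j

variable (hc : ∀ i j, Commute (P i) (P j))

def anovaProd (s u : Finset ι) : M :=
  s.noncommProd (anovaFactor P u) (pairwise_commute_anovaFactor hc s u)

theorem anovaProd_insert_of_notMem {a : ι} {s u : Finset ι} (ha : a ∉ s) (hau : a ∉ u) :
    anovaProd hc (insert a s) u = P a * anovaProd hc s u := by
  rw [anovaProd, noncommProd_insert_of_notMem _ _ _ _ ha, anovaFactor, if_neg hau]
  rfl

theorem anovaProd_insert_insert {a : ι} {s : Finset ι} (ha : a ∉ s) (u : Finset ι) :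
    anovaProd hc (insert a s) (insert a u) = (1 - P a) * anovaProd hc s u := by
  rw [anovaProd, noncommProd_insert_of_notMem _ _ _ _ ha, anovaFactor, if_pos (mem_insert_self a u)]
  congr 1
  refine noncommProd_congr rfl (fun j hj => ?_) _
  have hja : j ≠ a := ne_of_mem_of_not_mem hj ha
  simp only [anovaFactor, mem_insert, hja, false_or]

theorem sum_powerset_anovaProd (s : Finset ι) : ∑ u ∈ s.powerset, anovaProd hc s u = 1 := by
  induction s using Finset.induction_on with
  | empty => simp [anovaProd]
  | @insert a s ha ih =>
    have hau : ∀ u ∈ s.powerset, a ∉ u := fun u hu hau => ha (mem_powerset.mp hu hau)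
    rw [sum_powerset_insert ha,
      sum_congr rfl fun u hu => anovaProd_insert_of_notMem hc ha (hau u hu),
      sum_congr rfl fun u _ => anovaProd_insert_insert hc ha u,
      ← mul_sum, ← mul_sum, ih, mul_one, mul_one, add_sub_cancel]

end AnovaProduct

theorem anovaProd_apply_eq_zero {R N ι : Type*} [Semiring R] [AddCommGroup N] [Module R N]
    [DecidableEq ι] {P : ι → Module.End R N} (hc : ∀ i j, Commute (P i) (P j))
    {s u : Finset ι} {j : ι} (hjs : j ∈ s) (hju : j ∈ u) {x : N} (hx : P j x = x) :
    anovaProd hc s u x = 0 := by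
  rw [anovaProd, ← noncommProd_erase_mul s hjs, Module.End.mul_apply, anovaFactor, if_pos hju,
    LinearMap.sub_apply, Module.End.one_apply, hx, sub_self, map_zero]

/-- Kuo–Sloan–Wasilkowski–Woźniakowski minimal decomposition.
`D = ∏ I i` is a nonempty product set, `F` is a linear subspace of real-valued
functions on `D`, and `P j : F → F` are commuting projections such that `P j f`
is independent of the `j`-th coordinate and `P j f = f` whenever `f` is
independent of the `j`-th coordinate (Assumption I).  With
`f_u := (∏_{j∈u} (Id − P j)) ∘ (∏_{j∉u} P j) f`
(encoded as the product over all `j` of `Id − P j` for `j ∈ u` and `P j` otherwise),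
(a) `f = Σ_{u ⊆ [d]} f_u`, and (b) for any decomposition `f = Σ_u g_u` with `g_u`
independent of every coordinate outside `u`, if `g_v = 0` for all `v ⊇ u` then
`f_v = 0` for all `v ⊇ u`. -/
theorem statement_0 {d : ℕ} {I : Fin d → Type*}
    (F : Submodule ℝ ((∀ i, I i) → ℝ))
    (P : Fin d → Module.End ℝ F)
    (hcomm : ∀ i j, P i * P j = P j * P i)
    (hfix : ∀ (j : Fin d) (f : F),
      (∀ x y : ∀ i, I i, (∀ i, i ≠ j → x i = y i) →
        (f : (∀ i, I i) → ℝ) x = (f : (∀ i, I i) → ℝ) y) → P j f = f)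
    (f : F)
    (term : Finset (Fin d) → F)
    (hterm : ∀ u : Finset (Fin d),
      term u =
        (Finset.univ.noncommProd
          (fun j => if j ∈ u then (1 : Module.End ℝ F) - P j else P j)
          (fun i _ j _ hij => by
            have e : P i * P j = P j * P i := hcomm i j
            have key : ∀ v, P i (P j v) = P j (P i v) := by
              intro v
              have := DFunLike.congr_fun e v
              simpa only [Module.End.mul_apply] using this
            have h1 : ((1 : Module.End ℝ F) - P i) * P j
                = P j * ((1 : Module.End ℝ F) - P i) := by
              refine LinearMap.ext fun v => ?_
              simp only [Module.End.mul_apply, LinearMap.sub_apply, Module.End.one_apply,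
                map_sub, key]
            have h2 : P i * ((1 : Module.End ℝ F) - P j)
                = ((1 : Module.End ℝ F) - P j) * P i := by
              refine LinearMap.ext fun v => ?_
              simp only [Module.End.mul_apply, LinearMap.sub_apply, Module.End.one_apply,
                map_sub, key]
            have h3 : ((1 : Module.End ℝ F) - P i) * ((1 : Module.End ℝ F) - P j)
                = ((1 : Module.End ℝ F) - P j) * ((1 : Module.End ℝ F) - P i) := by
              refine LinearMap.ext fun v => ?_
              simp only [Module.End.mul_apply, LinearMap.sub_apply, Module.End.one_apply,
                map_sub, key]
              abel
            dsimp only [Function.onFun]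
            split_ifs
            · exact h3
            · exact h1
            · exact h2
            · exact e)) f) :
    -- (a) the decomposition property
    f = ∑ u : Finset (Fin d), term u ∧
    -- (b) minimality
    ∀ g : Finset (Fin d) → F,
      (∀ (u : Finset (Fin d)) (x y : ∀ i, I i), (∀ i ∈ u, x i = y i) →
        (g u : (∀ i, I i) → ℝ) x = (g u : (∀ i, I i) → ℝ) y) →
      f = ∑ u : Finset (Fin d), g u →
      ∀ u : Finset (Fin d), (∀ v, u ⊆ v → g v = 0) → ∀ v, u ⊆ v → term v = 0 := by
  have hc : ∀ i j, Commute (P i) (P j) := hcomm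
  have hterm' : ∀ u, term u = (anovaProd hc univ u : Module.End ℝ F) f := hterm
  refine ⟨?_, fun g hg hf u hgu v huv => ?_⟩
  · calc f = (∑ u ∈ univ.powerset, anovaProd hc univ u : Module.End ℝ F) f := by
          rw [sum_powerset_anovaProd]; rfl
      _ = ∑ u, term u := by rw [powerset_univ, LinearMap.sum_apply]; simp only [hterm']
  · rw [hterm', hf, map_sum]
    refine sum_eq_zero fun w _ => ?_
    by_cases hvw : v ⊆ w
    · rw [hgu w (huv.trans hvw), map_zero]
    · obtain ⟨j, hjv, hjw⟩ := not_subset.mp hvw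
      refine anovaProd_apply_eq_zero hc (mem_univ j) hjv (hfix j _ fun x y hxy => ?_)
      exact hg w x y fun i hi => hxy i (ne_of_mem_of_not_mem hi hjw)
end

section
/- Let D = ∏_{i=1}^d [a_i, b_i] ⊂ ℝ^d with a_i < b_i, let f : D → ℝ be twice continuously differentiable, let i ≠ j be indices in {1,…,d}, and suppose ∂²f/∂x_i∂x_j vanishes identically on D. Then for every anchor c ∈ D and every subset u ⊆ {1,…,d} with {i,j} ⊆ u, the anchored decomposition term f_{u,c} is identically zero on D. -/
/-!
Peeling off `i` and then `j` from `u` writes `f_{u,c}(x)` as an alternating sum, over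
`w ⊆ u \ {i, j}`, of second differences
`f(p + vᵢ + vⱼ) - f(p + vⱼ) - f(p + vᵢ) + f(p)` with `p = x^{w,c}`, `vᵢ = (xᵢ - cᵢ) eᵢ` and
`vⱼ = (xⱼ - cⱼ) eⱼ`. All four corners lie in the convex box `D`, and a second difference
vanishes whenever the mixed derivative `D_{vᵢ} D_{vⱼ} f` vanishes on a convex set containing
its corners: apply the mean value theorem first in the direction `vᵢ` to `D_{vⱼ} f`, then in
the direction `vⱼ` to `t ↦ f(p + vᵢ + t vⱼ) - f(p + t vⱼ)`.
-/

/-- The anchored decomposition term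
`f_{u,c}(x) = Σ_{v ⊆ u} (−1)^{|u|−|v|} f(x^{v,c})`, where `x^{v,c}` has `i`-th
coordinate `x i` for `i ∈ v` and `c i` otherwise. -/
noncomputable def anchoredTerm {d : ℕ} (f : (Fin d → ℝ) → ℝ) (c : Fin d → ℝ)
    (u : Finset (Fin d)) (x : Fin d → ℝ) : ℝ :=
  ∑ v ∈ u.powerset, (-1 : ℝ) ^ (u.card - v.card) * f (fun i => if i ∈ v then x i else c i)

open Set Finset

section SecondDifference

variable {E F : Type*} [NormedAddCommGroup E] [NormedSpace ℝ E]
  [NormedAddCommGroup F] [NormedSpace ℝ F]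

lemma eq_of_hasDerivAt_zero_on_unitInterval {g : ℝ → F}
    (hg : ∀ t ∈ Icc (0 : ℝ) 1, HasDerivAt g 0 t) : g 1 = g 0 := by
  have h := norm_image_sub_le_of_norm_deriv_le_segment_01' (f' := fun _ => 0) (C := 0)
    (fun t ht => (hg t ht).hasDerivWithinAt) (fun _ _ => norm_zero.le)
  exact sub_eq_zero.1 (norm_le_zero_iff.1 h)

lemma Convex.add_smul_add_smul_mem {S : Set E} (hS : Convex ℝ S) {p v w : E}
    (hp : p ∈ S) (hpv : p + v ∈ S) (hpw : p + w ∈ S) (hpvw : p + v + w ∈ S)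
    {s t : ℝ} (hs : s ∈ Icc (0 : ℝ) 1) (ht : t ∈ Icc (0 : ℝ) 1) :
    p + s • v + t • w ∈ S := by
  have hpsv : p + s • v ∈ S := hS.add_smul_mem hp hpv hs
  have hpsvw : p + s • v + w ∈ S := by
    rw [add_right_comm]
    exact hS.add_smul_mem hpw (by rwa [add_right_comm]) hs
  exact hS.add_smul_mem hpsv hpsvw ht

lemma ContDiff.differentiable_fderiv_apply {f : E → F} (hf : ContDiff ℝ 2 f) (w : E) :
    Differentiable ℝ fun z => fderiv ℝ f z w :=
  ((hf.fderiv_right le_rfl).clm_apply contDiff_const).differentiable one_ne_zero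

lemma hasDerivAt_add_smul (p v : E) (s : ℝ) : HasDerivAt (fun s : ℝ => p + s • v) v s := by
  simpa using ((hasDerivAt_id s).smul_const v).const_add p

theorem Convex.second_difference_eq_zero {S : Set E} (hS : Convex ℝ S) {f : E → F}
    (hf : ContDiff ℝ 2 f) {v w : E}
    (hmixed : ∀ y ∈ S, fderiv ℝ (fun z => fderiv ℝ f z w) y v = 0) {p : E}
    (hp : p ∈ S) (hpv : p + v ∈ S) (hpw : p + w ∈ S) (hpvw : p + v + w ∈ S) :
    f (p + v + w) - f (p + w) - f (p + v) + f p = 0 := by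
  have hDw_eq : ∀ t ∈ Icc (0 : ℝ) 1,
      fderiv ℝ f (p + v + t • w) w = fderiv ℝ f (p + t • w) w := by
    intro t ht
    have h := eq_of_hasDerivAt_zero_on_unitInterval
      (g := fun s => fderiv ℝ f (p + s • v + t • w) w) fun s hs => by
        have hline := (hasDerivAt_add_smul p v s).add_const (t • w)
        simpa [Function.comp_def, hmixed _ (hS.add_smul_add_smul_mem hp hpv hpw hpvw hs ht)]
          using (hf.differentiable_fderiv_apply w _).hasFDerivAt.comp_hasDerivAt s hline
    simpa using h
  have hdiff : ∀ t ∈ Icc (0 : ℝ) 1,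
      HasDerivAt (fun t : ℝ => f (p + v + t • w) - f (p + t • w)) 0 t := by
    intro t ht
    have hfd : Differentiable ℝ f := hf.differentiable two_ne_zero
    have h := ((hfd _).hasFDerivAt.comp_hasDerivAt t (hasDerivAt_add_smul (p + v) w t)).sub
      ((hfd _).hasFDerivAt.comp_hasDerivAt t (hasDerivAt_add_smul p w t))
    rw [hDw_eq t ht, sub_self] at h
    exact h
  have h := eq_of_hasDerivAt_zero_on_unitInterval hdiff
  simp only [one_smul, zero_smul, add_zero] at h
  rw [h]
  abel

lemma fderiv_fderiv_apply_smul_smul {f : E → F} (hf : ContDiff ℝ 2 f) (α β : ℝ) (v w y : E) :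
    fderiv ℝ (fun z => fderiv ℝ f z (β • w)) y (α • v)
      = (α * β) • fderiv ℝ (fun z => fderiv ℝ f z w) y v := by
  simp_rw [map_smul]
  rw [fderiv_fun_const_smul (hf.differentiable_fderiv_apply w y), smul_apply, smul_smul, mul_comm]

end SecondDifference

section Powerset

variable {ι R : Type*} [DecidableEq ι] [CommRing R]

lemma sum_powerset_insert_neg_one_pow_mul {a : ι} {s : Finset ι} (ha : a ∉ s)
    (φ : Finset ι → R) :
    ∑ v ∈ (insert a s).powerset, (-1 : R) ^ ((insert a s).card - v.card) * φ v
      = ∑ v ∈ s.powerset, (-1 : R) ^ (s.card - v.card) * (φ (insert a v) - φ v) := by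
  rw [sum_powerset_insert ha, ← sum_add_distrib]
  refine sum_congr rfl fun v hv => ?_
  have hvs : v ⊆ s := mem_powerset.1 hv
  have hav : a ∉ v := fun h => ha (hvs h)
  have hle : v.card ≤ s.card := card_le_card hvs
  rw [card_insert_of_notMem ha, card_insert_of_notMem hav, Nat.sub_add_comm hle,
    Nat.add_sub_add_right, pow_succ]
  ring

theorem sum_powerset_neg_one_pow_mul_eq_zero {i j : ι} (hij : i ≠ j) {u : Finset ι}
    (hi : i ∈ u) (hj : j ∈ u) {φ : Finset ι → R}
    (hφ : ∀ w : Finset ι, i ∉ w → j ∉ w →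
      φ (insert i (insert j w)) - φ (insert j w) - (φ (insert i w) - φ w) = 0) :
    ∑ v ∈ u.powerset, (-1 : R) ^ (u.card - v.card) * φ v = 0 := by
  set u' := (u.erase i).erase j
  have hj' : j ∉ u' := notMem_erase j _
  have hi' : i ∉ insert j u' := by simp [u', hij]
  have hu : u = insert i (insert j u') := by
    rw [insert_erase (mem_erase.2 ⟨hij.symm, hj⟩), insert_erase hi]
  rw [hu, sum_powerset_insert_neg_one_pow_mul hi', sum_powerset_insert_neg_one_pow_mul hj']
  refine sum_eq_zero fun w hw => ?_
  have hjw : j ∉ w := fun h => hj' (mem_powerset.1 hw h)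
  have hiw : i ∉ w := fun h => hi' (mem_insert_of_mem (mem_powerset.1 hw h))
  rw [hφ w hiw hjw, mul_zero]

end Powerset

section AnchoredPoint

variable {ι : Type*} [DecidableEq ι]

/-- The point `x^{v,c}`. -/
def anchoredPoint (c x : ι → ℝ) (v : Finset ι) : ι → ℝ := fun k => if k ∈ v then x k else c k

lemma anchoredPoint_mem_pi {c x : ι → ℝ} {s : ι → Set ℝ} (hc : c ∈ univ.pi s)
    (hx : x ∈ univ.pi s) (v : Finset ι) : anchoredPoint c x v ∈ univ.pi s := by
  intro k _
  unfold anchoredPoint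
  split_ifs
  exacts [hx k (mem_univ k), hc k (mem_univ k)]

lemma anchoredTerm_eq_sum_anchoredPoint {d : ℕ} (f : (Fin d → ℝ) → ℝ) (c x : Fin d → ℝ)
    (u : Finset (Fin d)) :
    anchoredTerm f c u x
      = ∑ v ∈ u.powerset, (-1 : ℝ) ^ (u.card - v.card) * f (anchoredPoint c x v) :=
  rfl

lemma anchoredPoint_insert (c x : ι → ℝ) {k : ι} {v : Finset ι} (hk : k ∉ v) :
    anchoredPoint c x (insert k v) = anchoredPoint c x v + (x k - c k) • Pi.single k 1 := by
  funext l
  rcases eq_or_ne l k with rfl | hl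
  · simp [anchoredPoint, hk]
  · simp [anchoredPoint, hl]

end AnchoredPoint

theorem statement_3_general {d : ℕ} (a b : Fin d → ℝ)
    (f : (Fin d → ℝ) → ℝ) (hf : ContDiff ℝ 2 f)
    (i j : Fin d) (hij : i ≠ j)
    (hmixed : ∀ x ∈ Set.univ.pi fun k => Set.Icc (a k) (b k),
      fderiv ℝ (fun y => fderiv ℝ f y (Pi.single j 1)) x (Pi.single i 1) = 0) :
    ∀ c ∈ Set.univ.pi fun k => Set.Icc (a k) (b k),
      ∀ u : Finset (Fin d), i ∈ u → j ∈ u →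
        ∀ x ∈ Set.univ.pi fun k => Set.Icc (a k) (b k),
          anchoredTerm f c u x = 0 := by
  intro c hc u hi hj x hx
  have hD : Convex ℝ (univ.pi fun k => Icc (a k) (b k)) := convex_pi fun k _ => convex_Icc _ _
  have hmixed' : ∀ y ∈ univ.pi fun k => Icc (a k) (b k),
      fderiv ℝ (fun z => fderiv ℝ f z ((x j - c j) • Pi.single j 1)) y
        ((x i - c i) • Pi.single i 1) = 0 := fun y hy => by
    rw [fderiv_fderiv_apply_smul_smul hf, hmixed y hy, smul_zero]
  rw [anchoredTerm_eq_sum_anchoredPoint]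
  refine sum_powerset_neg_one_pow_mul_eq_zero hij hi hj fun w hiw hjw => ?_
  have hjiw : j ∉ insert i w := by simp [hij.symm, hjw]
  have hcorner := fun v => anchoredPoint_mem_pi hc hx v
  have hpi := anchoredPoint_insert c x hiw
  have hpj := anchoredPoint_insert c x hjw
  have hpij : anchoredPoint c x (insert i (insert j w))
      = anchoredPoint c x w + (x i - c i) • Pi.single i 1 + (x j - c j) • Pi.single j 1 := by
    rw [Finset.insert_comm, anchoredPoint_insert c x hjiw, hpi]
  have h := hD.second_difference_eq_zero hf hmixed' (hcorner w) (hpi ▸ hcorner _)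
    (hpj ▸ hcorner _) (hpij ▸ hcorner _)
  rw [hpij, hpi, hpj]
  linear_combination h

/-- if `f` is `C²` and `∂²f/∂x_i∂x_j` vanishes identically on the
box `D = ∏ [a k, b k]` for some `i ≠ j`, then for every anchor `c ∈ D` and every
`u ⊆ {1,…,d}` with `{i,j} ⊆ u`, the anchored term `f_{u,c}` vanishes identically
on `D`. -/
theorem statement_3 {d : ℕ} (a b : Fin d → ℝ) (hab : ∀ k, a k < b k)
    (f : (Fin d → ℝ) → ℝ) (hf : ContDiff ℝ 2 f)
    (i j : Fin d) (hij : i ≠ j)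
    (hmixed : ∀ x ∈ Set.univ.pi fun k => Set.Icc (a k) (b k),
      fderiv ℝ (fun y => fderiv ℝ f y (Pi.single j 1)) x (Pi.single i 1) = 0) :
    ∀ c ∈ Set.univ.pi fun k => Set.Icc (a k) (b k),
      ∀ u : Finset (Fin d), i ∈ u → j ∈ u →
        ∀ x ∈ Set.univ.pi fun k => Set.Icc (a k) (b k),
          anchoredTerm f c u x = 0 :=
  statement_3_general a b f hf i j hij hmixed
end

section
/- Let D = ∏_{i=1}^d [a_i, b_i] ⊂ ℝ^d with a_i < b_i, let v ⊆ u ⊆ {1,…,d}, and let f : D → ℝ be |v| times continuously differentiable (so that the mixed partial derivative ∂_v f := ∂^{|v|} f / ∏_{i∈v} ∂x_i exists and is continuous). Then for every anchor c ∈ D the anchored term satisfies the sup-norm bound ‖f_{u,c}‖_∞ ≤ 2^{|u|−|v|} · ‖∂_v f‖_∞ · vol(D_v), where vol(D_v) = ∏_{i∈v} (b_i − a_i) and ‖·‖_∞ is the supremum norm over D. -/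
/-- The mixed partial derivative `∂_v f = ∂^{|v|} f / ∏_{i∈v} ∂x_i`. -/
noncomputable def mixedPartial {d : ℕ} (v : Finset (Fin d)) (f : (Fin d → ℝ) → ℝ) :
    (Fin d → ℝ) → ℝ :=
  v.toList.foldr (fun i g => fun x => fderiv ℝ g x (Pi.single i 1)) f

open Function Finset

theorem ContDiff.fderiv_apply_const {𝕜 E F : Type*} [NontriviallyNormedField 𝕜]
    [NormedAddCommGroup E] [NormedSpace 𝕜 E] [NormedAddCommGroup F] [NormedSpace 𝕜 F]
    {n : ℕ} {f : E → F} (hf : ContDiff 𝕜 (n + 1 : ℕ) f) (e : E) :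
    ContDiff 𝕜 n (fun x => fderiv 𝕜 f x e) :=
  (hf.fderiv_right (by simp)).clm_apply contDiff_const

section Anchored

variable {d : ℕ} (f : (Fin d → ℝ) → ℝ) (c x : Fin d → ℝ)

theorem anchoredTerm_empty : anchoredTerm f c ∅ x = f c := by
  simp [anchoredTerm]

theorem anchoredTerm_insert {j : Fin d} {s : Finset (Fin d)} (hj : j ∉ s) :
    anchoredTerm f c (insert j s) x =
      anchoredTerm f (update c j (x j)) s x - anchoredTerm f c s x := by
  rw [anchoredTerm, anchoredTerm, anchoredTerm, sum_powerset_insert hj, add_comm,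
    ← sub_neg_eq_add, ← sum_neg_distrib]
  congr 1 <;> refine sum_congr rfl fun r hr => ?_
  · have hjr : j ∉ r := fun h => hj (mem_powerset.mp hr h)
    rw [card_insert_of_notMem hj, card_insert_of_notMem hjr, Nat.succ_sub_succ]
    congr 2
    funext i
    by_cases hi : i = j <;> simp [hi]
  · rw [card_insert_of_notMem hj, Nat.succ_sub (card_le_card (mem_powerset.mp hr)), pow_succ]
    ring

theorem hasDerivAt_anchoredTerm_update {j : Fin d} {s : Finset (Fin d)} (hj : j ∉ s)
    (hf : Differentiable ℝ f) (t : ℝ) :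
    HasDerivAt (fun t => anchoredTerm f (update c j t) s x)
      (anchoredTerm (fun y => fderiv ℝ f y (Pi.single j 1)) (update c j t) s x) t := by
  refine HasDerivAt.fun_sum fun r hr => HasDerivAt.const_mul _ ?_
  have hjr : j ∉ r := fun h => hj (mem_powerset.mp hr h)
  have hpoint : ∀ t, (fun i => if i ∈ r then x i else update c j t i) =
      update (fun i => if i ∈ r then x i else c i) j t := fun t => by
    funext i
    by_cases hi : i = j <;> simp [hi, hjr]
  simp only [hpoint]
  exact (hf _).hasFDerivAt.comp_hasDerivAt t (hasDerivAt_update _ j t)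

end Anchored

theorem abs_anchoredTerm_le_of_subset {d : ℕ} {S : Fin d → Set ℝ} {f : (Fin d → ℝ) → ℝ}
    {u v : Finset (Fin d)} {B : ℝ}
    (hB : ∀ c ∈ Set.univ.pi S, ∀ x ∈ Set.univ.pi S, |anchoredTerm f c v x| ≤ B) (hvu : v ⊆ u) :
    ∀ c ∈ Set.univ.pi S, ∀ x ∈ Set.univ.pi S,
      |anchoredTerm f c u x| ≤ 2 ^ (u.card - v.card) * B := by
  suffices h : ∀ w : Finset (Fin d), Disjoint v w → ∀ c ∈ Set.univ.pi S, ∀ x ∈ Set.univ.pi S,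
      |anchoredTerm f c (v ∪ w) x| ≤ 2 ^ w.card * B by
    simpa only [union_sdiff_of_subset hvu, card_sdiff_of_subset hvu] using h (u \ v) disjoint_sdiff
  intro w
  induction w using Finset.induction_on with
  | empty => simpa using hB
  | insert j w hjw ih =>
    intro hvw c hc x hx
    have hj : j ∉ v ∪ w := by
      simpa [hjw] using (disjoint_insert_right.mp hvw).1
    have ih := ih (disjoint_insert_right.mp hvw).2
    have hc' : update c j (x j) ∈ Set.univ.pi S :=
      (Set.update_mem_pi_iff_of_mem hc).mpr fun _ => hx j trivial
    rw [union_insert, anchoredTerm_insert _ _ _ hj, card_insert_of_notMem hjw, pow_succ]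
    calc _ ≤ |anchoredTerm f (update c j (x j)) (v ∪ w) x| + |anchoredTerm f c (v ∪ w) x| :=
          abs_sub _ _
      _ ≤ 2 ^ w.card * B + 2 ^ w.card * B := add_le_add (ih _ hc' x hx) (ih c hc x hx)
      _ = _ := by ring

section ListPartial

variable {d : ℕ}

/-- `mixedPartial v = listPartial v.toList` differentiates in the order of `v.toList`, so the
estimate is proved by induction on that list, peeling off its last (innermost) entry. -/
noncomputable def listPartial (l : List (Fin d)) (f : (Fin d → ℝ) → ℝ) : (Fin d → ℝ) → ℝ :=
  l.foldr (fun i g => fun x => fderiv ℝ g x (Pi.single i 1)) f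

theorem listPartial_append_singleton (l : List (Fin d)) (j : Fin d) (f : (Fin d → ℝ) → ℝ) :
    listPartial (l ++ [j]) f = listPartial l (fun y => fderiv ℝ f y (Pi.single j 1)) := by
  simp [listPartial, List.foldr_append]

theorem contDiff_listPartial (l : List (Fin d)) {n : ℕ} {f : (Fin d → ℝ) → ℝ}
    (hf : ContDiff ℝ (n + l.length : ℕ) f) : ContDiff ℝ n (listPartial l f) := by
  induction l generalizing n with
  | nil => simpa [listPartial] using hf
  | cons i l ih =>
    refine ContDiff.fderiv_apply_const (ih ?_) _
    rwa [List.length_cons, ← add_assoc, add_right_comm] at hf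

theorem abs_anchoredTerm_le_of_abs_listPartial_le {a b : Fin d → ℝ} {M : ℝ} (l : List (Fin d))
    (hl : l.Nodup) (f : (Fin d → ℝ) → ℝ) (hf : ContDiff ℝ l.length f)
    (hM : ∀ y ∈ Set.univ.pi fun i => Set.Icc (a i) (b i), |listPartial l f y| ≤ M) :
    ∀ c ∈ Set.univ.pi fun i => Set.Icc (a i) (b i),
      ∀ x ∈ Set.univ.pi fun i => Set.Icc (a i) (b i),
        |anchoredTerm f c l.toFinset x| ≤ M * ∏ i ∈ l.toFinset, (b i - a i) := by
  induction l using List.reverseRecOn generalizing f with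
  | nil => exact fun c hc _ _ => by simpa [anchoredTerm_empty, listPartial] using hM c hc
  | append_singleton l j ih =>
    intro c hc x hx
    have hj : j ∉ l.toFinset := by
      simpa using List.disjoint_of_nodup_append hl |>.symm (List.mem_singleton_self j)
    have hins : (l ++ [j]).toFinset = insert j l.toFinset := by ext; simp
    rw [hins, prod_insert hj]
    set g : (Fin d → ℝ) → ℝ := fun y => fderiv ℝ f y (Pi.single j 1)
    have hf' : ContDiff ℝ (l.length + 1 : ℕ) f := by simpa using hf
    have hg_bound : ∀ t ∈ Set.Icc (a j) (b j),
        ‖anchoredTerm g (update c j t) l.toFinset x‖ ≤ M * ∏ i ∈ l.toFinset, (b i - a i) :=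
      fun t ht => ih hl.of_append_left g (hf'.fderiv_apply_const _)
        (by rwa [← listPartial_append_singleton]) _
        ((Set.update_mem_pi_iff_of_mem hc).mpr fun _ => ht) x hx
    have hcj : c j ∈ Set.Icc (a j) (b j) := hc j trivial
    have hxj : x j ∈ Set.Icc (a j) (b j) := hx j trivial
    have hmvt := (convex_Icc (a j) (b j)).norm_image_sub_le_of_norm_hasDerivWithin_le
      (fun t _ => (hasDerivAt_anchoredTerm_update f c x hj
        (hf'.differentiable (by simp)) t).hasDerivWithinAt) hg_bound hcj hxj
    have hC : 0 ≤ M * ∏ i ∈ l.toFinset, (b i - a i) := (norm_nonneg _).trans (hg_bound _ hcj)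
    have hxc : |x j - c j| ≤ b j - a j := abs_sub_le_iff.mpr
      ⟨by linarith [hxj.2, hcj.1], by linarith [hxj.1, hcj.2]⟩
    rw [anchoredTerm_insert _ _ _ hj]
    calc _ ≤ (M * ∏ i ∈ l.toFinset, (b i - a i)) * |x j - c j| := by
          simpa only [update_eq_self, Real.norm_eq_abs] using hmvt
      _ ≤ (M * ∏ i ∈ l.toFinset, (b i - a i)) * (b j - a j) := by gcongr
      _ = _ := by ring

end ListPartial

theorem IsCompact.le_ciSup_subtype {β : Type*} [TopologicalSpace β] {K : Set β} {g : β → ℝ}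
    (hK : IsCompact K) (hg : ContinuousOn g K) {y : β} (hy : y ∈ K) :
    g y ≤ ⨆ z : K, g z :=
  le_ciSup (by simpa only [Set.image_eq_range] using hK.bddAbove_image hg) (⟨y, hy⟩ : K)

theorem statement_4_general {d : ℕ} (a b : Fin d → ℝ)
    (u v : Finset (Fin d)) (hvu : v ⊆ u)
    (f : (Fin d → ℝ) → ℝ) (hf : ContDiff ℝ v.card f) :
    ∀ c ∈ Set.univ.pi fun i => Set.Icc (a i) (b i),
      ∀ x ∈ Set.univ.pi fun i => Set.Icc (a i) (b i),
        |anchoredTerm f c u x| ≤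
          2 ^ (u.card - v.card) *
            (⨆ y : (Set.univ.pi fun i => Set.Icc (a i) (b i) : Set (Fin d → ℝ)),
              |mixedPartial v f y|) *
            ∏ i ∈ v, (b i - a i) := by
  have hf' : ContDiff ℝ v.toList.length f := by rwa [length_toList]
  have hcont : Continuous (mixedPartial v f) :=
    (contDiff_listPartial (n := 0) v.toList (by simpa using hf')).continuous
  have hv := abs_anchoredTerm_le_of_abs_listPartial_le (a := a) (b := b) v.toList (nodup_toList v) f hf'
    fun y hy => (isCompact_univ_pi fun i => isCompact_Icc).le_ciSup_subtype
      hcont.abs.continuousOn hy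
  rw [toList_toFinset] at hv
  simpa only [mul_assoc] using abs_anchoredTerm_le_of_subset hv hvu

/-- for `v ⊆ u` and `f` which is `|v|` times continuously
differentiable, the anchored term satisfies
`‖f_{u,c}‖_∞ ≤ 2^{|u|−|v|} ‖∂_v f‖_∞ vol(D_v)` on `D = ∏ [a i, b i]`. -/
theorem statement_4 {d : ℕ} (a b : Fin d → ℝ) (hab : ∀ i, a i < b i)
    (u v : Finset (Fin d)) (hvu : v ⊆ u)
    (f : (Fin d → ℝ) → ℝ) (hf : ContDiff ℝ v.card f) :
    ∀ c ∈ Set.univ.pi fun i => Set.Icc (a i) (b i),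
      ∀ x ∈ Set.univ.pi fun i => Set.Icc (a i) (b i),
        |anchoredTerm f c u x| ≤
          2 ^ (u.card - v.card) *
            (⨆ y : (Set.univ.pi fun i => Set.Icc (a i) (b i) : Set (Fin d → ℝ)),
              |mixedPartial v f y|) *
            ∏ i ∈ v, (b i - a i) :=
  statement_4_general a b u v hvu f hf
end

section
/- Let D = ∏_{i=1}^d [a_i, b_i] ⊂ ℝ^d with a_i < b_i, let v ⊆ u ⊆ {1,…,d}, and let f : D → ℝ be |v| times continuously differentiable (so that ∂_v f := ∂^{|v|} f / ∏_{i∈v} ∂x_i exists and is continuous). Then the ANOVA term satisfies the sup-norm bound ‖f_{u,A}‖_∞ ≤ 2^{|u|−|v|} · ‖∂_v f‖_∞ · vol(D_v), where vol(D_v) = ∏_{i∈v} (b_i − a_i) and ‖·‖_∞ is the supremum norm over D. -/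
open MeasureTheory

/-- The ANOVA decomposition term
`f_{u,A}(x) = Σ_{v ⊆ u} (−1)^{|u|−|v|} (1/vol(D_{vᶜ})) ∫_{D_{vᶜ}} f(x^{v,s}) ds`. -/
noncomputable def anovaTerm {d : ℕ} (a b : Fin d → ℝ) (f : (Fin d → ℝ) → ℝ)
    (u : Finset (Fin d)) (x : Fin d → ℝ) : ℝ :=
  ∑ v ∈ u.powerset, (-1 : ℝ) ^ (u.card - v.card) *
    ((∏ i ∈ vᶜ, (b i - a i))⁻¹ *
      ∫ s : {i : Fin d // i ∉ v} → ℝ in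
          Set.univ.pi (fun i : {i : Fin d // i ∉ v} => Set.Icc (a i.1) (b i.1)),
        f (fun i => if h : i ∈ v then x i else s ⟨i, h⟩))

open Set

/-!
Write `Δ_w f x t = ∑_{s ⊆ w} (-1)^{|w|-|s|} f(x on s, t off s)` for the mixed difference of `f`
between `t` and `x` in the coordinates of `w`. By Fubini every average in `f_{u,A}(x)` is an
average over the whole box `D`, so `f_{u,A}(x)` is the average over `t ∈ D` of `Δ_u f x t`, and it
suffices to bound `Δ_u f x t` pointwise. Adding a coordinate `j` to `w` gives
`Δ_{w ∪ {j}} f x t = Δ_w f x t' - Δ_w f x t`, where `t'` is `t` with `t_j` replaced by `x_j`.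
For `j ∈ u \ v` the triangle inequality costs a factor `2`. For `j ∈ v` the mean value theorem
in `t_j` bounds the difference by `b_j - a_j` times a bound for `Δ_w (∂_j f)`; once all of `v`
has been used this way, what remains is `|∂_v f| ≤ ‖∂_v f‖_∞`.
-/

namespace Anova

variable {ι : Type*} [DecidableEq ι]

def mixedDiff (w : Finset ι) (f : (ι → ℝ) → ℝ) (x t : ι → ℝ) : ℝ :=
  ∑ s ∈ w.powerset, (-1 : ℝ) ^ (w.card - s.card) * f (s.piecewise x t)

@[simp]
lemma mixedDiff_empty (f : (ι → ℝ) → ℝ) (x t : ι → ℝ) : mixedDiff ∅ f x t = f t := by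
  simp [mixedDiff]

lemma mixedDiff_insert {w : Finset ι} {j : ι} (hj : j ∉ w) (f : (ι → ℝ) → ℝ) (x t : ι → ℝ) :
    mixedDiff (insert j w) f x t =
      mixedDiff w f x (Function.update t j (x j)) - mixedDiff w f x t := by
  rw [mixedDiff, Finset.sum_powerset_insert hj, sub_eq_neg_add, mixedDiff, mixedDiff,
    ← Finset.sum_neg_distrib]
  congr 1 <;> refine Finset.sum_congr rfl fun s hs => ?_
  · have hsw := Finset.card_le_card (Finset.mem_powerset.1 hs)
    rw [Finset.card_insert_of_notMem hj, Nat.sub_add_comm hsw, pow_succ]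
    ring
  · have hjs : j ∉ s := fun h => hj (Finset.mem_powerset.1 hs h)
    rw [Finset.card_insert_of_notMem hj, Finset.card_insert_of_notMem hjs,
      Finset.piecewise_insert, Finset.update_piecewise_of_notMem s x t hjs]
    simp

lemma update_mem_Icc {β : Type*} [Preorder β] {a b t : ι → β} (ht : t ∈ Icc a b) {j : ι}
    {c : β} (hc : c ∈ Icc (a j) (b j)) : Function.update t j c ∈ Icc a b :=
  ⟨le_update_iff.2 ⟨hc.1, fun i _ => ht.1 i⟩, update_le_iff.2 ⟨hc.2, fun i _ => ht.2 i⟩⟩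

lemma abs_mixedDiff_union_le {a b x : ι → ℝ} (hx : x ∈ Icc a b) {f : (ι → ℝ) → ℝ}
    {v : Finset ι} {K : ℝ} (hK : ∀ t ∈ Icc a b, |mixedDiff v f x t| ≤ K) {s : Finset ι}
    (hsv : Disjoint s v) : ∀ t ∈ Icc a b, |mixedDiff (s ∪ v) f x t| ≤ 2 ^ s.card * K := by
  induction s using Finset.induction_on with
  | empty => simpa using hK
  | insert j s hjs ih =>
    intro t ht
    have hjv : j ∉ s ∪ v := by
      simp [hjs, Finset.disjoint_left.1 hsv (Finset.mem_insert_self j s)]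
    have ih := ih (Finset.disjoint_of_subset_left (Finset.subset_insert j s) hsv)
    rw [Finset.insert_union, mixedDiff_insert hjv, Finset.card_insert_of_notMem hjs, pow_succ]
    linarith [abs_sub (mixedDiff (s ∪ v) f x (Function.update t j (x j)))
      (mixedDiff (s ∪ v) f x t), ih _ (update_mem_Icc ht ⟨hx.1 j, hx.2 j⟩), ih t ht]

noncomputable def partialDeriv (j : ι) (f : (ι → ℝ) → ℝ) : (ι → ℝ) → ℝ :=
  fun y => fderiv ℝ f y (Pi.single j 1)

noncomputable def iteratedPartial (L : List ι) (f : (ι → ℝ) → ℝ) : (ι → ℝ) → ℝ :=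
  L.foldr partialDeriv f

lemma iteratedPartial_append_singleton (L : List ι) (j : ι) (f : (ι → ℝ) → ℝ) :
    iteratedPartial (L ++ [j]) f = iteratedPartial L (partialDeriv j f) := by
  simp [iteratedPartial]

lemma continuous_piecewise_const_left {β : Type*} [TopologicalSpace β] (w : Finset ι)
    (x : ι → β) : Continuous fun t : ι → β => w.piecewise x t :=
  continuous_pi fun i => by
    by_cases hi : i ∈ w <;> simp only [Finset.piecewise, hi, if_true, if_false]
    exacts [continuous_const, continuous_apply i]

lemma abs_le_iSup_abs {X : Type*} [TopologicalSpace X] {s : Set X} (hs : IsCompact s)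
    {g : X → ℝ} (hg : ContinuousOn g s) {y : X} (hy : y ∈ s) : |g y| ≤ ⨆ z : s, |g z| :=
  le_ciSup (f := fun z : s => |g z|)
    (by simpa [image_eq_range] using (hs.image_of_continuousOn hg.abs).bddAbove) ⟨y, hy⟩

variable [Fintype ι]

lemma contDiff_partialDeriv {n : ℕ} {f : (ι → ℝ) → ℝ} (hf : ContDiff ℝ (n + 1) f) (j : ι) :
    ContDiff ℝ n (partialDeriv j f) :=
  (hf.fderiv_right le_rfl).clm_apply contDiff_const

lemma hasDerivAt_mixedDiff_update {w : Finset ι} {j : ι} (hj : j ∉ w) {f : (ι → ℝ) → ℝ}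
    (hf : Differentiable ℝ f) (x t : ι → ℝ) (c : ℝ) :
    HasDerivAt (fun c => mixedDiff w f x (Function.update t j c))
      (mixedDiff w (partialDeriv j f) x (Function.update t j c)) c := by
  refine HasDerivAt.fun_sum fun s hs => HasDerivAt.const_mul _ ?_
  have hjs : j ∉ s := fun h => hj (Finset.mem_powerset.1 hs h)
  simp only [← Finset.update_piecewise_of_notMem s x t hjs]
  exact (hf _).hasFDerivAt.comp_hasDerivAt c (hasDerivAt_update _ j c)

theorem abs_mixedDiff_le {a b x : ι → ℝ} (hx : x ∈ Icc a b) {L : List ι} (hL : L.Nodup)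
    {f : (ι → ℝ) → ℝ} (hf : ContDiff ℝ L.length f) {t : ι → ℝ} (ht : t ∈ Icc a b) :
    |mixedDiff L.toFinset f x t| ≤
      (⨆ y : Icc a b, |iteratedPartial L f y|) * ∏ i ∈ L.toFinset, (b i - a i) := by
  -- The last entry of `L` is the innermost derivative of `iteratedPartial L f`.
  induction L using List.reverseRecOn generalizing f t with
  | nil =>
    simpa [iteratedPartial] using abs_le_iSup_abs isCompact_Icc hf.continuous.continuousOn ht
  | append_singleton L j ih =>
    rw [List.nodup_append_comm, List.singleton_append, List.nodup_cons] at hL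
    obtain ⟨hjL, hL⟩ := hL
    have hjL' : j ∉ L.toFinset := by simpa using hjL
    have hf' : ContDiff ℝ ((L.length : WithTop ℕ∞) + 1) f := by simpa using hf
    set C := (⨆ y : Icc a b, |iteratedPartial L (partialDeriv j f) y|) *
      ∏ i ∈ L.toFinset, (b i - a i)
    have hderiv := hasDerivAt_mixedDiff_update hjL' (hf.differentiable (by simp)) x t
    have hbound : ∀ c ∈ Icc (a j) (b j),
        ‖mixedDiff L.toFinset (partialDeriv j f) x (Function.update t j c)‖ ≤ C :=
      fun c hc => ih hL (contDiff_partialDeriv hf' j) (update_mem_Icc ht hc)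
    have hxj : x j ∈ Icc (a j) (b j) := ⟨hx.1 j, hx.2 j⟩
    have htj : t j ∈ Icc (a j) (b j) := ⟨ht.1 j, ht.2 j⟩
    have hmvt := Convex.norm_image_sub_le_of_norm_hasDerivWithin_le
      (fun c _ => (hderiv c).hasDerivWithinAt) hbound (convex_Icc _ _) htj hxj
    rw [Function.update_eq_self] at hmvt
    have hC : 0 ≤ C := (norm_nonneg _).trans (hbound _ htj)
    calc |mixedDiff (L ++ [j]).toFinset f x t|
        = ‖mixedDiff L.toFinset f x (Function.update t j (x j)) -
            mixedDiff L.toFinset f x t‖ := by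
          rw [List.toFinset_append, Finset.union_comm]
          simp [mixedDiff_insert hjL']
      _ ≤ C * (b j - a j) := hmvt.trans (by gcongr; exact Real.dist_le_of_mem_Icc hxj htj)
      _ = _ := by
        rw [iteratedPartial_append_singleton, List.toFinset_append, Finset.union_comm]
        simp only [List.toFinset_cons, List.toFinset_nil, insert_empty_eq,
          Finset.singleton_union, Finset.prod_insert hjL', C]
        ring

theorem setIntegral_Icc_piecewise {a b : ι → ℝ} (hab : a ≤ b) (w : Finset ι)
    (f : (ι → ℝ) → ℝ) (x : ι → ℝ) :
    ∫ t in Icc a b, f (w.piecewise x t) =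
      (∏ i ∈ w, (b i - a i)) * ∫ s in univ.pi (fun i : {i // i ∉ w} => Icc (a i) (b i)),
        f (fun i => if h : i ∈ w then x i else s ⟨i, h⟩) := by
  -- the instance for which `volume_preserving_piEquivPiSubtypeProd` is stated
  let _ : Fintype {i // i ∈ w} := Subtype.fintype _
  set e := MeasurableEquiv.piEquivPiSubtypeProd (fun _ : ι => ℝ) (· ∈ w)
  have he : MeasurePreserving e.symm :=
    (volume_preserving_piEquivPiSubtypeProd (fun _ : ι => ℝ) (· ∈ w)).symm
  have hbox : e.symm ⁻¹' Icc a b = (univ.pi fun i : {i // i ∈ w} => Icc (a i) (b i)) ×ˢ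
      univ.pi fun i : {i // i ∉ w} => Icc (a i) (b i) := by
    rw [← pi_univ_Icc]
    exact Equiv.preimage_piEquivPiSubtypeProd_symm_pi _ _
  have hpw : ∀ z, w.piecewise x (e.symm z) = fun i => if h : i ∈ w then x i else z.2 ⟨i, h⟩ := by
    intro z; ext i; by_cases h : i ∈ w <;> simp [h, e, MeasurableEquiv.piEquivPiSubtypeProd]
  rw [← he.setIntegral_preimage_emb e.symm.measurableEmbedding, hbox]
  simp only [hpw, Measure.volume_eq_prod]
  rw [← Measure.prod_restrict,
    integral_fun_snd fun s : {i // i ∉ w} → ℝ => f fun i => if h : i ∈ w then x i else s ⟨i, h⟩,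
    measureReal_restrict_apply_univ, smul_eq_mul, measureReal_def, volume_pi_pi,
    ENNReal.toReal_prod, Finset.prod_subtype w (fun _ => Iff.rfl) (fun i => b i - a i)]
  congr 1
  exact Finset.prod_congr rfl fun i _ => by
    rw [Real.volume_Icc, ENNReal.toReal_ofReal (sub_nonneg.2 (hab i))]

theorem anovaTerm_eq_setIntegral_mixedDiff {d : ℕ} {a b : Fin d → ℝ} (hab : ∀ i, a i < b i)
    {f : (Fin d → ℝ) → ℝ} (hf : Continuous f) (u : Finset (Fin d)) (x : Fin d → ℝ) :
    anovaTerm a b f u x = (∏ i, (b i - a i))⁻¹ * ∫ t in Icc a b, mixedDiff u f x t := by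
  have hpos : ∀ s : Finset (Fin d), 0 < ∏ i ∈ s, (b i - a i) :=
    fun s => Finset.prod_pos fun i _ => sub_pos.2 (hab i)
  unfold anovaTerm mixedDiff
  rw [integral_finsetSum, Finset.mul_sum]
  · refine Finset.sum_congr rfl fun w _ => ?_
    rw [integral_const_mul, setIntegral_Icc_piecewise (fun i => (hab i).le),
      ← Finset.prod_mul_prod_compl w]
    field_simp [(hpos w).ne', (hpos wᶜ).ne']
  · exact fun w _ => (continuous_const.mul (hf.comp (continuous_piecewise_const_left w x)))
      |>.continuousOn.integrableOn_compact isCompact_Icc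

theorem abs_anovaTerm_le {d : ℕ} {a b : Fin d → ℝ} (hab : ∀ i, a i < b i)
    {f : (Fin d → ℝ) → ℝ} (hf : Continuous f) (u : Finset (Fin d)) (x : Fin d → ℝ) {K : ℝ}
    (hK : ∀ t ∈ Icc a b, |mixedDiff u f x t| ≤ K) : |anovaTerm a b f u x| ≤ K := by
  have hvol : volume.real (Icc a b) = ∏ i, (b i - a i) :=
    Real.volume_Icc_pi_toReal fun i => (hab i).le
  have hpos : 0 < ∏ i, (b i - a i) := Finset.prod_pos fun i _ => sub_pos.2 (hab i)
  have hint := norm_setIntegral_le_of_norm_le_const (μ := volume) isCompact_Icc.measure_lt_top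
    (fun t ht => (Real.norm_eq_abs _).trans_le (hK t ht))
  rw [hvol, Real.norm_eq_abs] at hint
  rw [anovaTerm_eq_setIntegral_mixedDiff hab hf u x, abs_mul, abs_inv, abs_of_pos hpos,
    inv_mul_le_iff₀ hpos, mul_comm]
  exact hint

theorem mixedPartial_eq_iteratedPartial {d : ℕ} (v : Finset (Fin d)) (f : (Fin d → ℝ) → ℝ) :
    mixedPartial v f = iteratedPartial v.toList f :=
  rfl

end Anova

open Anova in
/-- for `v ⊆ u` and `f` which is `|v|` times continuously
differentiable, the ANOVA term satisfies
`‖f_{u,A}‖_∞ ≤ 2^{|u|−|v|} ‖∂_v f‖_∞ vol(D_v)` on `D = ∏ [a i, b i]`. -/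
theorem statement_5 {d : ℕ} (a b : Fin d → ℝ) (hab : ∀ i, a i < b i)
    (u v : Finset (Fin d)) (hvu : v ⊆ u)
    (f : (Fin d → ℝ) → ℝ) (hf : ContDiff ℝ v.card f) :
    ∀ x ∈ Set.univ.pi fun i => Set.Icc (a i) (b i),
      |anovaTerm a b f u x| ≤
        2 ^ (u.card - v.card) *
          (⨆ y : (Set.univ.pi fun i => Set.Icc (a i) (b i) : Set (Fin d → ℝ)),
            |mixedPartial v f y|) *
          ∏ i ∈ v, (b i - a i) := by
  intro x hx
  rw [pi_univ_Icc] at hx ⊢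
  refine abs_anovaTerm_le hab hf.continuous u x fun t ht => ?_
  have hv : ∀ t ∈ Icc a b, |mixedDiff v f x t| ≤
      (⨆ y : Icc a b, |mixedPartial v f y|) * ∏ i ∈ v, (b i - a i) := fun t ht => by
    simpa only [Finset.toList_toFinset, mixedPartial_eq_iteratedPartial] using
      abs_mixedDiff_le hx v.nodup_toList (by simpa using hf) ht
  have hu := abs_mixedDiff_union_le hx hv (Finset.sdiff_disjoint : Disjoint (u \ v) v) t ht
  rwa [Finset.sdiff_union_of_subset hvu, Finset.card_sdiff_of_subset hvu, ← mul_assoc] at hu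
end

section
/- Let B_1, …, B_N ∈ ℝ^{d×d} be matrices whose diagonal entries are all zero. For an orthogonal matrix U ∈ ℝ^{d×d} define its joint sparsity level ℓ₀(U) := #{(i,j) ∈ {1,…,d}² : (Uᵀ B_n U)_{ij} ≠ 0 for some n ∈ {1,…,N}}. If an orthogonal matrix U satisfies ℓ₀(U) = max{ dim span{B_1,…,B_N}, max_{n∈{1,…,N}} rank(B_n) }, then U is a global minimizer of ℓ₀ over all orthogonal matrices in ℝ^{d×d}. -/
/-!
Conjugating by an orthogonal `V` is an invertible linear map, so it preserves both
`dim span {B_n}` and every `rank B_n`. On the other hand, all the conjugates `Vᵀ B_n V` are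
supported on the joint support, of size `ℓ₀(V)`: their span therefore lies in the coordinate
subspace of that support, and each of them has at most `ℓ₀(V)` nonzero rows. Hence
`max {dim span, max rank} ≤ ℓ₀(V)` for every orthogonal `V`, and a `U` attaining the bound
is a minimizer.
-/

open Matrix Module Submodule

theorem Submodule.finrank_span_image_of_injective {K M N : Type*} [DivisionRing K]
    [AddCommGroup M] [Module K M] [AddCommGroup N] [Module K N]
    (f : M →ₗ[K] N) (hf : Function.Injective f) (s : Set M) :
    finrank K (span K (f '' s)) = finrank K (span K s) := by
  rw [← map_span]
  exact (equivMapOfInjective f hf _).finrank_eq.symm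

namespace Matrix

variable {ι m n K : Type*} [Fintype m] [Fintype n] [Field K]

theorem finrank_span_le_card_of_support_subset (T : Set (Matrix m n K)) (S : Finset (m × n))
    (hT : ∀ M ∈ T, ∀ i j, M i j ≠ 0 → (i, j) ∈ S) :
    finrank K (span K T) ≤ S.card := by
  classical
  let E : Finset (Matrix m n K) := S.image fun p => single p.1 p.2 1
  have hT_le : span K T ≤ span K (E : Set (Matrix m n K)) := by
    refine span_le.mpr fun M hM => ?_
    have hM_eq : M = ∑ p ∈ S, M p.1 p.2 • single p.1 p.2 (1 : K) := by
      ext i j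
      rw [Matrix.sum_apply, Finset.sum_eq_single (i, j)]
      · simp
      · rintro ⟨k, l⟩ - hkl
        simp only [ne_eq, Prod.ext_iff, not_and, smul_apply, single_apply, smul_eq_mul, mul_ite,
          mul_one, mul_zero, ite_eq_right_iff, and_imp] at hkl ⊢
        tauto
      · intro hij
        simpa using not_imp_comm.mp (hT M hM i j) hij
    rw [hM_eq]
    exact sum_mem fun p hp => smul_mem _ _ (subset_span (Finset.mem_image_of_mem _ hp))
  calc finrank K (span K T) ≤ finrank K (span K (E : Set (Matrix m n K))) := finrank_mono hT_le
    _ ≤ E.card := finrank_span_finset_le_card E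
    _ ≤ S.card := Finset.card_image_le

section

variable [DecidableEq m] [DecidableEq n] {P : Matrix m m K} {Q : Matrix n n K}

theorem finrank_span_range_mul_mul (hP : IsUnit P.det) (hQ : IsUnit Q.det)
    (A : ι → Matrix m n K) :
    finrank K (span K (Set.range fun k => P * A k * Q)) = finrank K (span K (Set.range A)) := by
  let f := (mulLeftLinearMap n K P).comp (mulRightLinearMap m K Q)
  have hf : Function.Injective f := fun X Y h => by
    have cancel : ∀ Z : Matrix m n K, P⁻¹ * f Z * Q⁻¹ = Z := fun Z => by
      simp only [f, LinearMap.comp_apply, mulLeftLinearMap_apply, mulRightLinearMap_apply,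
        nonsing_inv_mul_cancel_left _ _ hP, mul_nonsing_inv_cancel_right _ _ hQ]
    rw [← cancel X, h, cancel]
  have hfA : f ∘ A = fun k => P * A k * Q := funext fun _ => (Matrix.mul_assoc _ _ _).symm
  rw [← hfA, Set.range_comp, finrank_span_image_of_injective f hf]

theorem rank_mul_mul (hP : IsUnit P.det) (hQ : IsUnit Q.det) (A : Matrix m n K) :
    (P * A * Q).rank = A.rank := by
  rw [rank_mul_eq_left_of_isUnit_det _ _ hQ, rank_mul_eq_right_of_isUnit_det _ _ hP]

end

def jointSupport [Fintype ι] [DecidableEq K] (A : ι → Matrix m n K) : Finset (m × n) :=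
  Finset.univ.filter fun p => ∃ k, A k p.1 p.2 ≠ 0

theorem max_finrank_span_rank_le_card_jointSupport [Fintype ι] [DecidableEq K]
    (A : ι → Matrix m n K) :
    max (finrank K (span K (Set.range A))) (Finset.univ.sup fun k => (A k).rank) ≤
      (jointSupport A).card := by
  classical
  have mem_jointSupport : ∀ k i j, A k i j ≠ 0 → (i, j) ∈ jointSupport A :=
    fun k i j h => by simpa [jointSupport] using ⟨k, h⟩
  refine max_le ?_ (Finset.sup_le fun k _ => ?_)
  · refine finrank_span_le_card_of_support_subset _ _ ?_
    rintro _ ⟨k, rfl⟩ i j h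
    exact mem_jointSupport k i j h
  · refine (rank_le_card_of_support_subset _ ((jointSupport A).image Prod.fst) ?_).trans
      Finset.card_image_le
    intro i hi
    obtain ⟨j, hj⟩ := Function.ne_iff.mp hi
    exact Finset.mem_image_of_mem Prod.fst (mem_jointSupport k i j hj)

end Matrix

theorem statement_11_general {d N : ℕ} (B : Fin N → Matrix (Fin d) (Fin d) ℝ)
    (U : Matrix (Fin d) (Fin d) ℝ)
    (hopt : (Finset.univ.filter fun p : Fin d × Fin d =>
        ∃ n : Fin N, (Uᵀ * B n * U) p.1 p.2 ≠ 0).card =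
      max (Module.finrank ℝ (Submodule.span ℝ (Set.range B)))
        (Finset.univ.sup fun n : Fin N => (B n).rank)) :
    ∀ V : Matrix (Fin d) (Fin d) ℝ, Vᵀ * V = 1 →
      (Finset.univ.filter fun p : Fin d × Fin d =>
          ∃ n : Fin N, (Uᵀ * B n * U) p.1 p.2 ≠ 0).card ≤
        (Finset.univ.filter fun p : Fin d × Fin d =>
          ∃ n : Fin N, (Vᵀ * B n * V) p.1 p.2 ≠ 0).card := by
  intro V hV
  have hVdet : IsUnit V.det := isUnit_det_of_left_inverse hV
  have hVTdet : IsUnit Vᵀ.det := isUnit_det_of_right_inverse hV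
  calc _ = max (finrank ℝ (span ℝ (Set.range B))) (Finset.univ.sup fun n => (B n).rank) := hopt
    _ = max (finrank ℝ (span ℝ (Set.range fun n => Vᵀ * B n * V)))
          (Finset.univ.sup fun n => (Vᵀ * B n * V).rank) := by
      simp only [finrank_span_range_mul_mul hVTdet hVdet, rank_mul_mul hVTdet hVdet]
    _ ≤ (jointSupport fun n => Vᵀ * B n * V).card :=
      max_finrank_span_rank_le_card_jointSupport _
    -- the two filters differ only in their decidability instances
    _ = _ := by unfold jointSupport; congr!

/-- let `B_1, …, B_N` have zero diagonals and, for orthogonal `U`,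
let `ℓ₀(U)` be the number of index pairs `(i,j)` with `(Uᵀ B_n U)_{ij} ≠ 0` for
some `n`.  If an orthogonal `U` satisfies
`ℓ₀(U) = max{dim span{B_n}, max_n rank B_n}`, then `U` minimizes `ℓ₀` over all
orthogonal matrices. -/
theorem statement_11 {d N : ℕ} (B : Fin N → Matrix (Fin d) (Fin d) ℝ)
    (hdiag : ∀ n i, B n i i = 0)
    (U : Matrix (Fin d) (Fin d) ℝ) (hU : Uᵀ * U = 1)
    (hopt : (Finset.univ.filter fun p : Fin d × Fin d =>
        ∃ n : Fin N, (Uᵀ * B n * U) p.1 p.2 ≠ 0).card =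
      max (Module.finrank ℝ (Submodule.span ℝ (Set.range B)))
        (Finset.univ.sup fun n : Fin N => (B n).rank)) :
    ∀ V : Matrix (Fin d) (Fin d) ℝ, Vᵀ * V = 1 →
      (Finset.univ.filter fun p : Fin d × Fin d =>
          ∃ n : Fin N, (Uᵀ * B n * U) p.1 p.2 ≠ 0).card ≤
        (Finset.univ.filter fun p : Fin d × Fin d =>
          ∃ n : Fin N, (Vᵀ * B n * V) p.1 p.2 ≠ 0).card :=
  statement_11_general B U hopt
end

section
/- Let d ≥ 2. For every U ∈ SO(d) there exist angle vectors α^r = (α^r_1, …, α^r_r) for r = 1, …, d−1 with α^r_1 ∈ [0, 2π) and α^r_j ∈ [0, π) for 2 ≤ j ≤ r, such that U = ∏_{r=1}^{d−1} ∏_{j=1}^{r} R(d − 1 − r + j, α^r_j), where the products are taken in order of increasing r and, within each r, increasing j. -/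
open Matrix

/-- The Jacobi (Givens) rotation matrix acting in the coordinate plane
`(k, k+1)` (0-indexed; the paper's 1-indexed `R(k+1, θ)`). -/
noncomputable def givens (d : ℕ) (k : ℕ) (θ : ℝ) : Matrix (Fin d) (Fin d) ℝ :=
  Matrix.of fun i j =>
    if (i : ℕ) = k ∧ (j : ℕ) = k then Real.cos θ
    else if (i : ℕ) = k ∧ (j : ℕ) = k + 1 then -Real.sin θ
    else if (i : ℕ) = k + 1 ∧ (j : ℕ) = k then Real.sin θ
    else if (i : ℕ) = k + 1 ∧ (j : ℕ) = k + 1 then Real.cos θ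
    else if i = j then 1 else 0

/-!
Hurwitz's parametrisation is by hyperspherical coordinates. Row `m` of
`R(m, θ₀) R(m+1, θ₁) ⋯ R(d-2, θ_{d-2-m})` is `cos θ₀ e_m - sin θ₀ v`, where `v` is row `m+1` of the
same product without its first factor. By induction on `d - m`, every unit vector supported on the
coordinates `m, …, d-1` is, up to sign, such a row with all angles in `[0, π)`; replacing `θ₀` by
`θ₀ + π` flips the sign, so with `θ₀ ∈ [0, 2π)` every such vector is a row.
If the first `m` rows of `U ∈ SO(d)` are `e_0, …, e_{m-1}`, its row `m` is such a vector, and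
multiplying `U` on the right by the transpose of the matching product leaves a rotation whose first
`m + 1` rows are standard. A rotation whose first `d - 1` rows are standard has determinant equal to
its last diagonal entry, so it is the identity.
-/

open Real

lemma one_row_eq_single {n α : Type*} [DecidableEq n] [Zero α] [One α] (i : n) :
    (1 : Matrix n n α) i = Pi.single i 1 :=
  funext fun _ => one_eq_pi_single

section Orthogonal

variable {n R : Type*} [Fintype n] [DecidableEq n] [CommRing R]

lemma transpose_mem_specialOrthogonalGroup {A : Matrix n n R}
    (hA : A ∈ specialOrthogonalGroup n R) : Aᵀ ∈ specialOrthogonalGroup n R := by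
  rw [mem_specialOrthogonalGroup_iff, mem_orthogonalGroup_iff, transpose_transpose, det_transpose,
    ← mem_orthogonalGroup_iff', ← mem_specialOrthogonalGroup_iff]
  exact hA

lemma row_dotProduct_row {U : Matrix n n R} (hU : U * Uᵀ = 1) (i j : n) :
    U i ⬝ᵥ U j = (1 : Matrix n n R) i j := by
  rw [← hU]
  rfl

lemma apply_eq_zero_of_row_eq_single {U : Matrix n n R} (hU : U * Uᵀ = 1) {i j : n}
    (hij : i ≠ j) (hj : U j = Pi.single j 1) : U i j = 0 := by
  simpa [hj, one_apply_ne hij] using row_dotProduct_row hU i j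

lemma mul_transpose_row_eq_single {U W : Matrix n n R} (hW : W * Wᵀ = 1) {i : n}
    (h : U i = W i) : (U * Wᵀ) i = Pi.single i 1 := by
  rw [mul_apply_eq_vecMul, h, ← mul_apply_eq_vecMul, hW, one_row_eq_single]

lemma eq_one_of_rows_eq_single {U : Matrix n n R} (hU : U ∈ specialOrthogonalGroup n R) (l : n)
    (hrows : ∀ i ≠ l, U i = Pi.single i 1) : U = 1 := by
  rw [mem_specialOrthogonalGroup_iff, mem_orthogonalGroup_iff] at hU
  have hl : U l = U l l • Pi.single l 1 := by
    funext j
    rcases eq_or_ne j l with rfl | hj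
    · simp
    · simp [hj, apply_eq_zero_of_row_eq_single hU.1 hj.symm (hrows j hj)]
  have hU1 : U = (1 : Matrix n n R).updateRow l (U l l • (1 : Matrix n n R) l) := by
    funext i
    rcases eq_or_ne i l with rfl | hi
    · rw [updateRow_self, one_row_eq_single, ← hl]
    · rw [updateRow_ne hi, hrows i hi, one_row_eq_single]
  have hll : U l l = 1 := by
    have hdet := hU.2
    rwa [hU1, det_updateRow_smul, updateRow_eq_self, det_one, mul_one] at hdet
  rw [hU1, hll, one_smul, updateRow_eq_self]

end Orthogonal

section Givens

variable {d k : ℕ}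

lemma givens_row_of_ne (θ : ℝ) {i : Fin d} (h₁ : (i : ℕ) ≠ k) (h₂ : (i : ℕ) ≠ k + 1) :
    givens d k θ i = Pi.single i 1 := by
  ext j
  simp [givens, Pi.single_apply, h₁, h₂, @eq_comm _ i j]

lemma givens_row_fst (θ : ℝ) {i i' : Fin d} (hi : (i : ℕ) = k) (hi' : (i' : ℕ) = k + 1) :
    givens d k θ i = cos θ • Pi.single i 1 - sin θ • Pi.single i' 1 := by
  ext j
  by_cases h₁ : (j : ℕ) = k <;> by_cases h₂ : (j : ℕ) = k + 1 <;>
    simp [givens, Pi.single_apply, Fin.ext_iff, hi, hi', h₁, h₂, @eq_comm ℕ k j]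

lemma givens_row_snd (θ : ℝ) {i i' : Fin d} (hi : (i : ℕ) = k) (hi' : (i' : ℕ) = k + 1) :
    givens d k θ i' = sin θ • Pi.single i 1 + cos θ • Pi.single i' 1 := by
  ext j
  by_cases h₁ : (j : ℕ) = k <;> by_cases h₂ : (j : ℕ) = k + 1 <;>
    simp [givens, Pi.single_apply, Fin.ext_iff, hi, hi', h₁, h₂, @eq_comm ℕ (k + 1) j]

lemma givens_zero : givens d k 0 = 1 := by
  ext i j
  simp only [givens, of_apply, one_apply, Fin.ext_iff, cos_zero, sin_zero, neg_zero]
  split_ifs <;> first | rfl | omega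

lemma givens_transpose (θ : ℝ) : (givens d k θ)ᵀ = givens d k (-θ) := by
  ext i j
  simp only [givens, transpose_apply, of_apply, Fin.ext_iff, cos_neg, sin_neg, neg_neg]
  split_ifs <;> first | rfl | omega

lemma givens_mul_givens (hk : k + 1 < d) (θ φ : ℝ) :
    givens d k θ * givens d k φ = givens d k (θ + φ) := by
  have hk₀ : ((⟨k, by omega⟩ : Fin d) : ℕ) = k := rfl
  have hk₁ : ((⟨k + 1, hk⟩ : Fin d) : ℕ) = k + 1 := rfl
  funext l
  rw [mul_apply_eq_vecMul]
  by_cases h₁ : (l : ℕ) = k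
  · simp only [givens_row_fst _ h₁ hk₁, sub_vecMul, smul_vecMul, single_one_vecMul, row_apply',
      givens_row_snd _ h₁ hk₁, cos_add, sin_add]
    module
  by_cases h₂ : (l : ℕ) = k + 1
  · simp only [givens_row_snd _ hk₀ h₂, add_vecMul, smul_vecMul, single_one_vecMul, row_apply',
      givens_row_fst _ hk₀ h₂, cos_add, sin_add]
    module
  simp only [givens_row_of_ne _ h₁ h₂, single_one_vecMul, row_apply']

lemma givens_mem_specialOrthogonalGroup (hk : k + 1 < d) (θ : ℝ) :
    givens d k θ ∈ specialOrthogonalGroup (Fin d) ℝ := by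
  have hmul : givens d k θ * (givens d k θ)ᵀ = 1 := by
    rw [givens_transpose, givens_mul_givens hk, add_neg_cancel, givens_zero]
  refine ⟨(mem_orthogonalGroup_iff (Fin d) ℝ).mpr hmul, ?_⟩
  -- `det = 1` rather than `-1`: the determinant is a square, `givens θ = givens (θ/2) ^ 2`.
  have hsq : (givens d k θ).det * (givens d k θ).det = 1 := by
    simpa [det_transpose] using congrArg det hmul
  have hnonneg : 0 ≤ (givens d k θ).det := by
    rw [← add_halves θ, ← givens_mul_givens hk, det_mul]
    exact mul_self_nonneg _
  show (givens d k θ).det = 1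
  nlinarith

end Givens

lemma exists_angle_Ico_pi {x : ℝ} (hx : x ^ 2 < 1) :
    ∃ θ ∈ Set.Ico 0 π, cos θ = x ∧ sin θ = √(1 - x ^ 2) := by
  obtain ⟨hx₁, hx₂⟩ := abs_lt.mp ((sq_lt_one_iff_abs_lt_one x).mp hx)
  exact ⟨arccos x, ⟨arccos_nonneg x, arccos_lt_pi.mpr hx₁⟩, cos_arccos hx₁.le hx₂.le,
    sin_arccos x⟩

lemma single_eq_or_eq_neg_of_dotProduct_self {n : Type*} [Fintype n] [DecidableEq n]
    {u : n → ℝ} {i : n} (hu : u ⬝ᵥ u = 1) (hi : ∀ j ≠ i, u j = 0) :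
    Pi.single i 1 = u ∨ Pi.single i 1 = -u := by
  have hu_single : u = Pi.single i (u i) := by
    funext j
    rcases eq_or_ne j i with rfl | hj
    · simp
    · simp [hj, hi j hj]
  rw [hu_single, dotProduct_single, Pi.single_eq_same, mul_self_eq_one_iff] at hu
  rcases hu with h | h <;> rw [hu_single, h] <;> simp [Pi.single_neg]

lemma exists_eq_smul_single_add_sqrt_smul {n : Type*} [Fintype n] [DecidableEq n]
    {u : n → ℝ} {i : n} (hu : u ⬝ᵥ u = 1) (hi : ∃ j ≠ i, u j ≠ 0) :
    ∃ w : n → ℝ, w ⬝ᵥ w = 1 ∧ w i = 0 ∧ (∀ j, u j = 0 → w j = 0) ∧ u i ^ 2 < 1 ∧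
      u = u i • Pi.single i 1 + √(1 - u i ^ 2) • w := by
  obtain ⟨j₀, hj₀, huj₀⟩ := hi
  set t := u - u i • Pi.single i 1
  have ht_dot : t ⬝ᵥ t = 1 - u i ^ 2 := by
    simp only [t, sub_dotProduct, dotProduct_sub, smul_dotProduct, dotProduct_smul,
      dotProduct_single, single_dotProduct, hu, smul_eq_mul, Pi.sub_apply, Pi.smul_apply,
      Pi.single_eq_same]
    ring
  have ht_pos : 0 < t ⬝ᵥ t := by
    refine lt_of_le_of_ne (Finset.sum_nonneg fun j _ => mul_self_nonneg (t j)) (Ne.symm ?_)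
    rw [Ne, dotProduct_self_eq_zero]
    intro h
    exact huj₀ (by simpa [t, hj₀] using congrFun h j₀)
  rw [← ht_dot]
  set ρ := √(t ⬝ᵥ t)
  have hρ : 0 < ρ := sqrt_pos.mpr ht_pos
  have hρ_sq : ρ ^ 2 = t ⬝ᵥ t := sq_sqrt ht_pos.le
  refine ⟨ρ⁻¹ • t, ?_, by simp [t], fun j hj => ?_, by linarith, ?_⟩
  · simp only [smul_dotProduct, dotProduct_smul, smul_eq_mul, ← hρ_sq]
    field_simp
  · rcases eq_or_ne j i with rfl | hji
    · simp [t]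
    · simp [t, hj, hji]
  · simp only [smul_smul, mul_inv_cancel₀ hρ.ne', one_smul, t]
    abel

noncomputable def givensChain (d m n : ℕ) (θ : ℕ → ℝ) : Matrix (Fin d) (Fin d) ℝ :=
  ((List.range n).map fun j => givens d (m + j) (θ j)).prod

section GivensChain

variable {d : ℕ}

lemma givensChain_succ (m n : ℕ) (θ : ℕ → ℝ) :
    givensChain d m (n + 1) θ = givens d m (θ 0) * givensChain d (m + 1) n (fun j => θ (j + 1)) := by
  simp only [givensChain, List.range_succ_eq_map, List.map_cons, List.map_map, List.prod_cons,
    add_zero, Function.comp_def, Nat.succ_eq_add_one, add_assoc, add_comm 1]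

lemma givensChain_zero_angles (m n : ℕ) : givensChain d m n (fun _ => 0) = 1 := by
  simp [givensChain, givens_zero]

lemma givensChain_mem_specialOrthogonalGroup {m n : ℕ} (h : m + n < d) (θ : ℕ → ℝ) :
    givensChain d m n θ ∈ specialOrthogonalGroup (Fin d) ℝ := by
  refine Submonoid.list_prod_mem _ fun A hA => ?_
  obtain ⟨j, hj, rfl⟩ := List.mem_map.mp hA
  exact givens_mem_specialOrthogonalGroup (by simp at hj; omega) _

lemma givensChain_row_of_lt {m : ℕ} (n : ℕ) (θ : ℕ → ℝ) {i : Fin d} (hi : (i : ℕ) < m) :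
    givensChain d m n θ i = Pi.single i 1 := by
  induction n generalizing m θ with
  | zero => exact one_row_eq_single i
  | succ n ih =>
    rw [givensChain_succ, mul_apply_eq_vecMul, givens_row_of_ne _ (by omega) (by omega),
      single_one_vecMul, row_apply', ih _ (by omega)]

lemma givensChain_succ_row_self {m : ℕ} (n : ℕ) (θ : ℕ → ℝ) {i i' : Fin d} (hi : (i : ℕ) = m)
    (hi' : (i' : ℕ) = m + 1) :
    givensChain d m (n + 1) θ i =
      cos (θ 0) • Pi.single i 1 - sin (θ 0) • givensChain d (m + 1) n (fun j => θ (j + 1)) i' := by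
  rw [givensChain_succ, mul_apply_eq_vecMul, givens_row_fst _ hi hi', sub_vecMul, smul_vecMul,
    smul_vecMul, single_one_vecMul, single_one_vecMul, row_apply', row_apply',
    givensChain_row_of_lt _ _ (by omega)]

lemma givensChain_zero_angles_row_eq_or_neg {m : ℕ} (n : ℕ) {i : Fin d} {u : Fin d → ℝ}
    (hu : u ⬝ᵥ u = 1) (hi : ∀ j ≠ i, u j = 0) :
    givensChain d m n (fun _ => 0) i = u ∨ givensChain d m n (fun _ => 0) i = -u := by
  rw [givensChain_zero_angles, one_row_eq_single]
  exact single_eq_or_eq_neg_of_dotProduct_self hu hi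

lemma exists_givensChain_row_eq_or_neg (n : ℕ) {i : Fin d} (hn : (i : ℕ) + n + 1 = d)
    {u : Fin d → ℝ} (hu : u ⬝ᵥ u = 1) (hsupp : ∀ j : Fin d, (j : ℕ) < i → u j = 0) :
    ∃ θ : ℕ → ℝ, (∀ j < n, θ j ∈ Set.Ico 0 π) ∧
      (givensChain d i n θ i = u ∨ givensChain d i n θ i = -u) := by
  induction n generalizing i u with
  | zero =>
    refine ⟨fun _ => 0, fun _ h => absurd h (Nat.not_lt_zero _), ?_⟩
    refine givensChain_zero_angles_row_eq_or_neg 0 hu fun j hj => hsupp j ?_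
    have := Fin.val_ne_of_ne hj
    omega
  | succ n ih =>
    by_cases hcoord : ∀ j ≠ i, u j = 0
    · exact ⟨fun _ => 0, fun _ _ => ⟨le_rfl, pi_pos⟩,
        givensChain_zero_angles_row_eq_or_neg _ hu hcoord⟩
    obtain ⟨w, hw, hwi, hw_supp, hc, hu_eq⟩ :=
      exists_eq_smul_single_add_sqrt_smul hu (by simpa using hcoord)
    obtain ⟨φ, hφ, hrow⟩ := ih (i := ⟨i + 1, by omega⟩) (by simp only; omega) hw fun j hj => by
      rcases eq_or_ne j i with rfl | hji
      · exact hwi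
      · exact hw_supp j (hsupp j (by have := Fin.val_ne_of_ne hji; simp only at hj; omega))
    have hcons : ∀ θ₀ : ℝ, θ₀ ∈ Set.Ico 0 π → ∀ j < n + 1,
        (fun | 0 => θ₀ | j + 1 => φ j : ℕ → ℝ) j ∈ Set.Ico 0 π := by
      rintro θ₀ hθ₀ (_ | j) hj
      exacts [hθ₀, hφ j (by omega)]
    -- `sin θ₀ ≥ 0` leaves no choice of sign in front of `w`, so the row is `u` or `-u` according
    -- to the sign with which `w` was reached, and `cos θ₀ = ± u i` accordingly.
    rcases hrow with hrow | hrow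
    · obtain ⟨θ₀, hθ₀, hcos, hsin⟩ := exists_angle_Ico_pi (x := -u i) (by rwa [neg_sq])
      refine ⟨fun | 0 => θ₀ | j + 1 => φ j, hcons θ₀ hθ₀, Or.inr ?_⟩
      rw [givensChain_succ_row_self n _ rfl (i' := ⟨i + 1, by omega⟩) rfl]
      dsimp only
      rw [hrow, hcos, hsin, neg_sq]
      conv_rhs => rw [hu_eq]
      module
    · obtain ⟨θ₀, hθ₀, hcos, hsin⟩ := exists_angle_Ico_pi hc
      refine ⟨fun | 0 => θ₀ | j + 1 => φ j, hcons θ₀ hθ₀, Or.inl ?_⟩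
      rw [givensChain_succ_row_self n _ rfl (i' := ⟨i + 1, by omega⟩) rfl]
      dsimp only
      rw [hrow, hcos, hsin]
      conv_rhs => rw [hu_eq]
      module

lemma exists_givensChain_row_eq (n : ℕ) {i : Fin d} (hn : (i : ℕ) + n + 2 = d)
    {u : Fin d → ℝ} (hu : u ⬝ᵥ u = 1) (hsupp : ∀ j : Fin d, (j : ℕ) < i → u j = 0) :
    ∃ θ : ℕ → ℝ, (θ 0 ∈ Set.Ico 0 (2 * π) ∧ ∀ j, 1 ≤ j → j ≤ n → θ j ∈ Set.Ico 0 π) ∧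
      givensChain d i (n + 1) θ i = u := by
  obtain ⟨θ, hθ, hrow | hrow⟩ := exists_givensChain_row_eq_or_neg (n + 1) (by omega) hu hsupp
  · obtain ⟨h₁, h₂⟩ := hθ 0 (by omega)
    exact ⟨θ, ⟨⟨h₁, by linarith [pi_pos]⟩, fun j _ hj => hθ j (by omega)⟩, hrow⟩
  · obtain ⟨h₁, h₂⟩ := hθ 0 (by omega)
    refine ⟨fun | 0 => θ 0 + π | j + 1 => θ (j + 1), ⟨⟨by linarith, by linarith⟩, ?_⟩, ?_⟩
    · rintro (_ | j) h hj
      exacts [absurd h (by omega), hθ _ (by omega)]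
    · have hi' : (i : ℕ) + 1 < d := by omega
      rw [givensChain_succ_row_self n _ rfl (i' := ⟨i + 1, hi'⟩) rfl] at hrow ⊢
      dsimp only
      rw [cos_add_pi, sin_add_pi, ← neg_neg u, ← hrow]
      module

end GivensChain

lemma exists_givensChain_prod_eq_of_rows_eq_single {d : ℕ} (n : ℕ) (hn : n + 1 ≤ d)
    {U : Matrix (Fin d) (Fin d) ℝ} (hU : U ∈ specialOrthogonalGroup (Fin d) ℝ)
    (hrows : ∀ i : Fin d, (i : ℕ) + n + 1 < d → U i = Pi.single i 1) :
    ∃ α : ℕ → ℕ → ℝ,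
      (∀ r < n, α r 0 ∈ Set.Ico 0 (2 * π) ∧ ∀ j, 1 ≤ j → j ≤ r → α r j ∈ Set.Ico 0 π) ∧
      U = ((List.range n).map fun r => givensChain d (d - 2 - r) (r + 1) (α r)).prod := by
  induction n generalizing U with
  | zero =>
    refine ⟨0, fun r hr => absurd hr (Nat.not_lt_zero r), ?_⟩
    rw [List.range_zero, List.map_nil, List.prod_nil]
    refine eq_one_of_rows_eq_single hU ⟨d - 1, by omega⟩ fun i hi => hrows i ?_
    have : (i : ℕ) ≠ d - 1 := fun h => hi (Fin.ext h)
    omega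
  | succ n ih =>
    have hUUt : U * Uᵀ = 1 := (mem_orthogonalGroup_iff _ _).mp hU.1
    set m := d - 2 - n
    let i : Fin d := ⟨m, by omega⟩
    have hi : (i : ℕ) = m := rfl
    obtain ⟨θ, hθ, hrow⟩ := exists_givensChain_row_eq n (i := i) (by omega)
      (by rw [row_dotProduct_row hUUt, one_apply_eq])
      (fun j hj => apply_eq_zero_of_row_eq_single hUUt (Fin.ne_of_gt hj) (hrows j (by omega)))
    set W := givensChain d m (n + 1) θ
    have hW : W ∈ specialOrthogonalGroup (Fin d) ℝ :=
      givensChain_mem_specialOrthogonalGroup (by omega) θ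
    have hU_W : ∀ j : Fin d, (j : ℕ) ≤ m → U j = W j := by
      intro j hj
      rcases hj.lt_or_eq with hj | hj
      · exact (hrows j (by omega)).trans (givensChain_row_of_lt _ _ hj).symm
      · rw [show j = i from Fin.ext hj]
        exact hrow.symm
    have hUWt : U * Wᵀ ∈ specialOrthogonalGroup (Fin d) ℝ :=
      mul_mem hU (transpose_mem_specialOrthogonalGroup hW)
    obtain ⟨α, hα, hprod⟩ := ih (by omega) hUWt fun j hj =>
      mul_transpose_row_eq_single ((mem_orthogonalGroup_iff _ _).mp hW.1) (hU_W j (by omega))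
    refine ⟨Function.update α n θ, fun r hr => ?_, ?_⟩
    · rcases (Nat.lt_succ_iff_lt_or_eq.mp hr) with hr | rfl
      · rw [Function.update_of_ne hr.ne]
        exact hα r hr
      · rw [Function.update_self]
        exact hθ
    · calc U = U * Wᵀ * W := by
            rw [mul_assoc, (mem_orthogonalGroup_iff' _ _).mp hW.1, mul_one]
        _ = _ := by
          rw [hprod, List.range_succ, List.map_append, List.prod_append, List.map_singleton,
            List.prod_singleton, Function.update_self]
          congr 1
          refine congrArg List.prod (List.map_congr_left fun r hr => ?_)
          rw [Function.update_of_ne (List.mem_range.mp hr).ne]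

/-- Indices are shifted to start at `0` (`r = r' + 1`, `j = j' + 1`), so the paper's rotation
index `d − 1 − r + j` becomes `d − 2 − r' + j'`. -/
theorem statement_15 (d : ℕ) (hd : 2 ≤ d) (U : Matrix (Fin d) (Fin d) ℝ)
    (hU : Uᵀ * U = 1) (hdet : U.det = 1) :
    ∃ α : ℕ → ℕ → ℝ,
      (∀ r' < d - 1, α r' 0 ∈ Set.Ico 0 (2 * Real.pi) ∧
        ∀ j', 1 ≤ j' → j' ≤ r' → α r' j' ∈ Set.Ico 0 Real.pi) ∧
      U = ((List.range (d - 1)).map fun r' =>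
            (((List.range (r' + 1)).map fun j' =>
              givens d (d - 2 - r' + j') (α r' j')).prod)).prod :=
  exists_givensChain_prod_eq_of_rows_eq_single (d - 1) (by omega)
    ⟨(mem_orthogonalGroup_iff' _ _).mpr hU, hdet⟩ fun i hi => by omega
end
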